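/- arXiv:math/0611644 — 5 statements merged into one kernel-verified Lean document; each statement's English description precedes it below -/
import Mathlib

section
/- For all real q > 0, σ > 0 and t > 0, the integral ∫₀ᵗ exp(−q²/(4σ²τ)) · 1/(√τ·√(t−τ)) dτ equals π·erfc(|q|/(2σ√t)), where erfc is the complementary error function. -/
open Real MeasureTheory Set

noncomputable def erfc (x : ℝ) : ℝ := (2 / Real.sqrt π) * ∫ s in Set.Ioi x, Real.exp (-s ^ 2)

/-!
The substitution `τ = t / (1 + u²)` turns the arcsine weight `dτ / (√τ √(t - τ))` into
`2 du / (1 + u²)`, so with `b = q² / (4σ²t)` the integral becomes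
`2 ∫₀^∞ e^{-b(1+u²)} / (1 + u²) du`.
Writing `e^{-b(1+u²)} / (1 + u²) = ∫_b^∞ e^{-c(1+u²)} dc` and exchanging the integrals, the
inner Gaussian integral is `√π e^{-c} / (2√c)`, and `c = s²` turns
`∫_b^∞ e^{-c} / √c dc` into `2 ∫_{√b}^∞ e^{-s²} ds`.
-/

theorem setIntegral_Ioo_mul_one_div_sqrt_mul_sqrt_sub (g : ℝ → ℝ) {t : ℝ} (ht : 0 < t) :
    ∫ τ in Ioo 0 t, g τ * (1 / (√τ * √(t - τ))) =
      2 * ∫ u in Ioi 0, g (t / (1 + u ^ 2)) / (1 + u ^ 2) := by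
  have hpos : ∀ u : ℝ, 0 < 1 + u ^ 2 := fun u => by positivity
  have himage : (fun u : ℝ => t / (1 + u ^ 2)) '' Ioi 0 = Ioo 0 t := by
    ext τ
    constructor
    · rintro ⟨u, hu, rfl⟩
      exact ⟨by positivity, div_lt_self ht (by nlinarith [mem_Ioi.mp hu])⟩
    · rintro ⟨hτ, hτt⟩
      have hlt : 1 < t / τ := (one_lt_div hτ).mpr hτt
      refine ⟨√(t / τ - 1), sqrt_pos.mpr (by linarith), ?_⟩
      simp only
      rw [sq_sqrt (by linarith)]
      field_simp
      ring
  have hderiv : ∀ u ∈ Ioi (0 : ℝ), HasDerivWithinAt (fun u : ℝ => t / (1 + u ^ 2))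
      (-(t * (2 * u)) / (1 + u ^ 2) ^ 2) (Ioi 0) u := fun u _ =>
    (((hasDerivAt_pow 2 u).const_add 1).fun_inv (hpos u).ne').const_mul t
      |>.hasDerivWithinAt |>.congr_deriv (by simp [div_eq_mul_inv]; ring)
  have hinj : InjOn (fun u : ℝ => t / (1 + u ^ 2)) (Ioi 0) := by
    intro x hx y hy hxy
    rw [div_eq_div_iff (hpos x).ne' (hpos y).ne', mul_right_inj' ht.ne'] at hxy
    nlinarith [mem_Ioi.mp hx, mem_Ioi.mp hy]
  rw [← himage, integral_image_eq_integral_abs_deriv_smul measurableSet_Ioi hderiv hinj,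
    ← integral_const_mul]
  refine setIntegral_congr_fun measurableSet_Ioi fun u (hu : 0 < u) => ?_
  have hsqrt : √(t / (1 + u ^ 2)) * √(t - t / (1 + u ^ 2)) = t * u / (1 + u ^ 2) := by
    rw [← sqrt_mul (by positivity), ← sqrt_sq (by positivity : 0 ≤ t * u / (1 + u ^ 2))]
    congr 1
    field_simp
    ring
  rw [smul_eq_mul, hsqrt, abs_of_neg (div_neg_of_neg_of_pos (by nlinarith) (by positivity))]
  field_simp

theorem exp_neg_mul_div_eq_setIntegral_Ioi {k : ℝ} (hk : 0 < k) (b : ℝ) :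
    exp (-k * b) / k = ∫ c in Ioi b, exp (-k * c) := by
  rw [integral_exp_mul_Ioi (neg_lt_zero.mpr hk), neg_div_neg_eq]

theorem setIntegral_Ioi_exp_neg_div_sqrt {b : ℝ} (hb : 0 ≤ b) :
    ∫ c in Ioi b, exp (-c) / √c = 2 * ∫ s in Ioi √b, exp (-s ^ 2) := by
  have himage : (fun s : ℝ => s ^ 2) '' Ioi √b = Ioi b := by
    ext c
    constructor
    · rintro ⟨s, hs, rfl⟩
      exact (sqrt_lt' ((sqrt_nonneg b).trans_lt hs)).mp hs
    · intro (hc : b < c)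
      exact ⟨√c, sqrt_lt_sqrt hb hc, sq_sqrt (hb.trans hc.le)⟩
  have hderiv : ∀ s ∈ Ioi √b, HasDerivWithinAt (fun s : ℝ => s ^ 2) (2 * s) (Ioi √b) s :=
    fun s _ => by simpa using (hasDerivAt_pow 2 s).hasDerivWithinAt
  have hinj : InjOn (fun s : ℝ => s ^ 2) (Ioi √b) :=
    (pow_left_strictMonoOn₀ two_ne_zero).injOn.mono fun s (hs : √b < s) =>
      (sqrt_nonneg b).trans hs.le
  rw [← himage, integral_image_eq_integral_abs_deriv_smul measurableSet_Ioi hderiv hinj,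
    ← integral_const_mul]
  refine setIntegral_congr_fun measurableSet_Ioi fun s (hs : √b < s) => ?_
  have hs0 : 0 < s := (sqrt_nonneg b).trans_lt hs
  rw [smul_eq_mul, abs_of_pos (by positivity), sqrt_sq hs0.le]
  field_simp

-- For `c ≤ 0` both sides are `0`: the integral diverges and `√c = 0`.
theorem setIntegral_Ioi_exp_neg_one_add_sq_mul (c : ℝ) :
    ∫ u in Ioi 0, exp (-(1 + u ^ 2) * c) = √π / 2 * (exp (-c) / √c) := by
  have hsplit : ∀ u : ℝ, exp (-(1 + u ^ 2) * c) = exp (-c) * exp (-c * u ^ 2) := fun u => by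
    rw [← exp_add]; ring_nf
  simp_rw [hsplit]
  rw [integral_const_mul, integral_gaussian_Ioi, sqrt_div pi_pos.le]
  ring

theorem integrable_exp_neg_one_add_sq_mul {b : ℝ} (hb : 0 ≤ b) :
    Integrable (Function.uncurry fun u c : ℝ => exp (-(1 + u ^ 2) * c))
      ((volume.restrict (Ioi 0)).prod (volume.restrict (Ioi b))) := by
  have hpos : ∀ u : ℝ, 0 < 1 + u ^ 2 := fun u => by positivity
  have hcont : Continuous (Function.uncurry fun u c : ℝ => exp (-(1 + u ^ 2) * c)) := by
    fun_prop
  refine (integrable_prod_iff hcont.aestronglyMeasurable).mpr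
    ⟨ae_of_all _ fun u => exp_neg_integrableOn_Ioi b (hpos u), ?_⟩
  have hnorm : ∀ u : ℝ, ∫ c in Ioi b, ‖exp (-(1 + u ^ 2) * c)‖ =
      exp (-(1 + u ^ 2) * b) / (1 + u ^ 2) := fun u => by
    simp_rw [norm_of_nonneg (exp_pos _).le]
    exact (exp_neg_mul_div_eq_setIntegral_Ioi (hpos u) b).symm
  simp only [Function.uncurry_apply_pair, hnorm]
  have hmeas : Continuous fun u : ℝ => exp (-(1 + u ^ 2) * b) / (1 + u ^ 2) :=
    (continuous_exp.comp (by fun_prop)).div (by fun_prop) fun u => (hpos u).ne'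
  refine integrable_inv_one_add_sq.integrableOn.mono' hmeas.aestronglyMeasurable
    (ae_of_all _ fun u => ?_)
  rw [norm_of_nonneg (by positivity), div_eq_mul_inv]
  exact mul_le_of_le_one_left (by positivity) (exp_le_one_iff.mpr (by nlinarith [hpos u]))

theorem setIntegral_Ioi_exp_neg_mul_one_add_sq_div {b : ℝ} (hb : 0 ≤ b) :
    ∫ u in Ioi 0, exp (-(1 + u ^ 2) * b) / (1 + u ^ 2) =
      √π * ∫ s in Ioi √b, exp (-s ^ 2) := by
  have hpos : ∀ u : ℝ, 0 < 1 + u ^ 2 := fun u => by positivity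
  simp_rw [fun u => exp_neg_mul_div_eq_setIntegral_Ioi (hpos u) b]
  rw [integral_integral_swap (integrable_exp_neg_one_add_sq_mul hb)]
  simp_rw [setIntegral_Ioi_exp_neg_one_add_sq_mul]
  rw [integral_const_mul, setIntegral_Ioi_exp_neg_div_sqrt hb]
  ring

theorem stmt0_general (q σ t : ℝ) (hσ : 0 < σ) (ht : 0 < t) :
    (∫ τ in Set.Ioo (0 : ℝ) t,
        Real.exp (-q ^ 2 / (4 * σ ^ 2 * τ)) * (1 / (Real.sqrt τ * Real.sqrt (t - τ)))) =
      π * erfc (|q| / (2 * σ * Real.sqrt t)) := by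
  have hexponent : ∀ u : ℝ,
      -q ^ 2 / (4 * σ ^ 2 * (t / (1 + u ^ 2))) = -(1 + u ^ 2) * (q ^ 2 / (4 * σ ^ 2 * t)) :=
    fun u => by field_simp
  have hsqrt : √(q ^ 2 / (4 * σ ^ 2 * t)) = |q| / (2 * σ * √t) := by
    rw [← sqrt_sq (by positivity : 0 ≤ |q| / (2 * σ * √t)), div_pow, mul_pow, mul_pow,
      sq_abs, sq_sqrt ht.le]
    norm_num
  rw [setIntegral_Ioo_mul_one_div_sqrt_mul_sqrt_sub _ ht]
  simp_rw [hexponent]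
  rw [setIntegral_Ioi_exp_neg_mul_one_add_sq_div (by positivity), hsqrt, erfc]
  field_simp
  rw [sq_sqrt pi_pos.le]
  ring

theorem stmt0 (q σ t : ℝ) (hq : 0 < q) (hσ : 0 < σ) (ht : 0 < t) :
    (∫ τ in Set.Ioo (0 : ℝ) t,
        Real.exp (-q ^ 2 / (4 * σ ^ 2 * τ)) * (1 / (Real.sqrt τ * Real.sqrt (t - τ)))) =
      π * erfc (|q| / (2 * σ * Real.sqrt t)) :=
  stmt0_general q σ t hσ ht
end

section
/- For all a > 0, y real, q ≠ 0, and t > 0, ∫₀ᵗ exp(−y²/(4a(t−τ))) · exp(−q²/(4aτ)) · 1/(τ^{3/2}·√(t−τ)) dτ = (2√(πa)/(|q|√t)) · exp(−(|y|+|q|)²/(4at)). -/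
/-!
Substituting `τ = t / (1 + s ^ 2)` cancels the algebraic factor against the Jacobian, leaving
`2 / t`, and splits the exponent as `-(|y| + |q|)² / (4at) - (α s - β / s)²` with
`α = |q| / √(4at)`, `β = |y| / √(4at)`. What remains is the Cauchy–Schlömilch integral
`∫₀^∞ exp (-(α s - β / s)²) ds = √π / (2α)`: the involution `s ↦ β / (α s)` turns it into
`∫₀^∞ (β / (α s²)) exp (-(α s - β / s)²) ds`, and averaging the two forms gives
`(1 / 2α) ∫₀^∞ (α + β / s²) exp (-(α s - β / s)²) ds`, a Gaussian integral over `ℝ` in the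
variable `u = α s - β / s`.
-/

open Real MeasureTheory Set

lemma hasDerivAt_mul_sub_div (α β : ℝ) {s : ℝ} (hs : s ≠ 0) :
    HasDerivAt (fun s => α * s - β / s) (α + β / s ^ 2) s := by
  simp only [div_eq_mul_inv]
  exact ((hasDerivAt_id' s).const_mul α).fun_sub ((hasDerivAt_inv hs).const_mul β)
    |>.congr_deriv (by ring)

lemma strictMonoOn_mul_sub_div {α β : ℝ} (hα : 0 < α) (hβ : 0 ≤ β) :
    StrictMonoOn (fun s => α * s - β / s) (Ioi 0) := by
  intro s (hs : 0 < s) u _ hsu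
  have : β / u ≤ β / s := div_le_div_of_nonneg_left hβ hs hsu.le
  have : α * s < α * u := mul_lt_mul_of_pos_left hsu hα
  dsimp only
  linarith

lemma image_Ioi_mul_sub_div {α β : ℝ} (hα : 0 < α) (hβ : 0 < β) :
    (fun s => α * s - β / s) '' Ioi 0 = univ := by
  refine eq_univ_of_forall fun v => ?_
  -- the positive root of `α s² - v s - β = 0`
  set D := √(v ^ 2 + 4 * α * β)
  have hD : D ^ 2 = v ^ 2 + 4 * α * β := sq_sqrt (by positivity)
  have hvD : 0 < v + D := by nlinarith [sqrt_nonneg (v ^ 2 + 4 * α * β), mul_pos hα hβ]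
  refine ⟨(v + D) / (2 * α), div_pos hvD (by positivity), ?_⟩
  field_simp
  linear_combination hD

lemma integral_Ioi_comp_div_smul {E : Type*} [NormedAddCommGroup E] [NormedSpace ℝ E]
    (f : ℝ → E) {c : ℝ} (hc : 0 < c) :
    ∫ s in Ioi 0, (c / s ^ 2) • f (c / s) = ∫ s in Ioi 0, f s := by
  have himg : (fun s => c / s) '' Ioi 0 = Ioi 0 := by
    refine Subset.antisymm (image_subset_iff.2 fun s (hs : 0 < s) => div_pos hc hs) fun s hs => ?_
    exact ⟨c / s, div_pos hc hs, div_div_cancel₀ hc.ne'⟩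
  have hderiv : ∀ s ∈ Ioi (0 : ℝ), HasDerivWithinAt (fun s => c / s) (-(c / s ^ 2)) (Ioi 0) s := by
    intro s (hs : 0 < s)
    simpa [div_eq_mul_inv] using ((hasDerivAt_inv hs.ne').const_mul c).hasDerivWithinAt
  have hinj : InjOn (fun s => c / s) (Ioi 0) := fun s _ u _ h => by
    simpa [hc.ne', div_eq_mul_inv] using h
  conv_rhs => rw [← himg, integral_image_eq_integral_abs_deriv_smul measurableSet_Ioi hderiv hinj]
  refine setIntegral_congr_fun measurableSet_Ioi fun s (hs : 0 < s) => ?_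
  rw [abs_neg, abs_of_pos (by positivity)]

lemma integrableOn_Ioi_mul_exp_neg_sq_mul_sub_div {α β : ℝ} (hα : 0 < α) (hβ : 0 < β) :
    IntegrableOn (fun s => (α + β / s ^ 2) * exp (-(α * s - β / s) ^ 2)) (Ioi 0) := by
  have hderiv := fun s (hs : s ∈ Ioi (0 : ℝ)) =>
    (hasDerivAt_mul_sub_div α β (ne_of_gt hs)).hasDerivWithinAt (s := Ioi 0)
  have key := integrableOn_image_iff_integrableOn_abs_deriv_smul measurableSet_Ioi hderiv
    (strictMonoOn_mul_sub_div hα hβ.le).injOn fun u => exp (-u ^ 2)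
  rw [image_Ioi_mul_sub_div hα hβ, integrableOn_univ] at key
  refine (key.1 (by simpa using integrable_exp_neg_mul_sq one_pos)).congr_fun
    (fun s (hs : 0 < s) => ?_) measurableSet_Ioi
  simp only [smul_eq_mul, abs_of_pos (by positivity : 0 < α + β / s ^ 2)]

lemma integral_Ioi_mul_exp_neg_sq_mul_sub_div {α β : ℝ} (hα : 0 < α) (hβ : 0 < β) :
    ∫ s in Ioi 0, (α + β / s ^ 2) * exp (-(α * s - β / s) ^ 2) = √π := by
  have hderiv := fun s (hs : s ∈ Ioi (0 : ℝ)) =>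
    (hasDerivAt_mul_sub_div α β (ne_of_gt hs)).hasDerivWithinAt (s := Ioi 0)
  have key := integral_image_eq_integral_abs_deriv_smul measurableSet_Ioi hderiv
    (strictMonoOn_mul_sub_div hα hβ.le).injOn fun u => exp (-u ^ 2)
  have hgauss : ∫ u, exp (-u ^ 2) = √π := by simpa using integral_gaussian 1
  rw [image_Ioi_mul_sub_div hα hβ, setIntegral_univ, hgauss] at key
  rw [key]
  refine setIntegral_congr_fun measurableSet_Ioi fun s (hs : 0 < s) => ?_
  rw [smul_eq_mul, abs_of_pos (by positivity)]

lemma integral_Ioi_exp_neg_sq_mul_sub_div {α β : ℝ} (hα : 0 < α) (hβ : 0 ≤ β) :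
    ∫ s in Ioi 0, exp (-(α * s - β / s) ^ 2) = √π / (2 * α) := by
  rcases hβ.eq_or_lt with rfl | hβ
  · simp_rw [zero_div, sub_zero, mul_pow, ← neg_mul, integral_gaussian_Ioi, sqrt_div pi_pos.le,
      sqrt_sq hα.le]
    ring
  have hint := integrableOn_Ioi_mul_exp_neg_sq_mul_sub_div hα hβ
  have hg : IntegrableOn (fun s => exp (-(α * s - β / s) ^ 2)) (Ioi 0) := by
    refine (hint.const_mul α⁻¹).mono' ?_ ?_
    · exact (by fun_prop : Measurable fun s => exp (-(α * s - β / s) ^ 2)).aestronglyMeasurable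
    · refine (ae_restrict_iff' measurableSet_Ioi).2 (.of_forall fun s (hs : 0 < s) => ?_)
      have : 1 ≤ α⁻¹ * (α + β / s ^ 2) := by
        rw [mul_add, inv_mul_cancel₀ hα.ne']
        linarith [show 0 ≤ α⁻¹ * (β / s ^ 2) by positivity]
      rw [norm_of_nonneg (exp_pos _).le, ← mul_assoc]
      exact le_mul_of_one_le_left (exp_pos _).le this
  -- `s ↦ β / (α s)` is an involution of `(0, ∞)` that preserves the integrand
  have hsymm : ∫ s in Ioi 0, β / α / s ^ 2 * exp (-(α * s - β / s) ^ 2)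
      = ∫ s in Ioi 0, exp (-(α * s - β / s) ^ 2) := by
    conv_rhs => rw [← integral_Ioi_comp_div_smul _ (div_pos hβ hα)]
    refine setIntegral_congr_fun measurableSet_Ioi fun s (hs : 0 < s) => ?_
    have : α * (β / α / s) - β / (β / α / s) = -(α * s - β / s) := by
      field_simp
      ring
    rw [smul_eq_mul, this, neg_sq]
  have hsplit : (∫ s in Ioi 0, (α + β / s ^ 2) * exp (-(α * s - β / s) ^ 2))
      - ∫ s in Ioi 0, α * exp (-(α * s - β / s) ^ 2)
      = α * ∫ s in Ioi 0, β / α / s ^ 2 * exp (-(α * s - β / s) ^ 2) := by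
    rw [← integral_sub hint (hg.const_mul α), ← integral_const_mul]
    refine setIntegral_congr_fun measurableSet_Ioi fun s (hs : 0 < s) => ?_
    field_simp
    ring
  rw [integral_Ioi_mul_exp_neg_sq_mul_sub_div hα hβ, integral_const_mul, hsymm] at hsplit
  rw [eq_div_iff (by positivity)]
  linear_combination -hsplit

lemma integral_Ioo_eq_integral_Ioi_comp_div_one_add_sq {E : Type*} [NormedAddCommGroup E]
    [NormedSpace ℝ E] (f : ℝ → E) {t : ℝ} (ht : 0 < t) :
    ∫ τ in Ioo 0 t, f τ = ∫ s in Ioi 0, (2 * t * s / (1 + s ^ 2) ^ 2) • f (t / (1 + s ^ 2)) := by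
  have himg : (fun s => t / (1 + s ^ 2)) '' Ioi 0 = Ioo 0 t := by
    refine Subset.antisymm (image_subset_iff.2 fun s (hs : 0 < s) => ?_) fun τ ⟨hτ, hτt⟩ => ?_
    · exact ⟨by positivity, div_lt_self ht (by nlinarith)⟩
    · have : 0 < t / τ - 1 := by rw [sub_pos, one_lt_div hτ]; exact hτt
      refine ⟨√(t / τ - 1), sqrt_pos.2 this, ?_⟩
      dsimp only
      rw [sq_sqrt this.le, add_sub_cancel, div_div_cancel₀ ht.ne']
  have hderiv : ∀ s ∈ Ioi (0 : ℝ),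
      HasDerivWithinAt (fun s => t / (1 + s ^ 2)) (-(2 * t * s / (1 + s ^ 2) ^ 2)) (Ioi 0) s := by
    intro s _
    refine ((hasDerivAt_const s t).div ((hasDerivAt_pow 2 s).const_add 1) (by positivity))
      |>.congr_deriv ?_ |>.hasDerivWithinAt
    ring
  have hinj : InjOn (fun s => t / (1 + s ^ 2)) (Ioi 0) := fun s (hs : 0 < s) u (hu : 0 < u) h => by
    have : s ^ 2 = u ^ 2 := by
      rw [div_eq_div_iff (by positivity) (by positivity)] at h
      nlinarith
    exact (pow_left_inj₀ hs.le hu.le two_ne_zero).1 this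
  rw [← himg, integral_image_eq_integral_abs_deriv_smul measurableSet_Ioi hderiv hinj]
  refine setIntegral_congr_fun measurableSet_Ioi fun s (hs : 0 < s) => ?_
  rw [abs_neg, abs_of_pos (by positivity)]

lemma rpow_three_halves_mul_sqrt_sub_div_one_add_sq {t s : ℝ} (ht : 0 < t) (hs : 0 < s) :
    (t / (1 + s ^ 2)) ^ ((3 : ℝ) / 2) * √(t - t / (1 + s ^ 2)) = t ^ 2 * s / (1 + s ^ 2) ^ 2 := by
  have hτ : 0 < t / (1 + s ^ 2) := by positivity
  have hprod : t / (1 + s ^ 2) * (t - t / (1 + s ^ 2)) = (t * s / (1 + s ^ 2)) ^ 2 := by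
    field_simp
    ring
  rw [show (3 : ℝ) / 2 = 1 + 1 / 2 by norm_num, rpow_add hτ, rpow_one, ← sqrt_eq_rpow, mul_assoc,
    ← sqrt_mul hτ.le, hprod, sqrt_sq (by positivity)]
  field_simp

lemma exponent_comp_div_one_add_sq (y q : ℝ) {c t s : ℝ} (hc : 0 < c) (ht : 0 < t) (hs : 0 < s) :
    -y ^ 2 / (c * (t - t / (1 + s ^ 2))) + -q ^ 2 / (c * (t / (1 + s ^ 2)))
      = -(|y| + |q|) ^ 2 / (c * t) + -(|q| / √(c * t) * s - |y| / √(c * t) / s) ^ 2 := by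
  have hct : √(c * t) ^ 2 = c * t := sq_sqrt (by positivity)
  have : 0 < √(c * t) := by positivity
  field_simp
  rw [hct]
  ring_nf
  rw [sq_abs, sq_abs]
  ring

theorem stmt2 (a y q t : ℝ) (ha : 0 < a) (hq : q ≠ 0) (ht : 0 < t) :
    (∫ τ in Set.Ioo (0 : ℝ) t,
        Real.exp (-y ^ 2 / (4 * a * (t - τ))) * Real.exp (-q ^ 2 / (4 * a * τ)) *
          (1 / (τ ^ ((3 : ℝ) / 2) * Real.sqrt (t - τ)))) =
      (2 * Real.sqrt (π * a) / (|q| * Real.sqrt t)) *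
        Real.exp (-(|y| + |q|) ^ 2 / (4 * a * t)) := by
  have h4a : 0 < 4 * a := by positivity
  have hpoint : ∀ s ∈ Ioi (0 : ℝ), (2 * t * s / (1 + s ^ 2) ^ 2) •
      (exp (-y ^ 2 / (4 * a * (t - t / (1 + s ^ 2)))) * exp (-q ^ 2 / (4 * a * (t / (1 + s ^ 2))))
        * (1 / ((t / (1 + s ^ 2)) ^ ((3 : ℝ) / 2) * √(t - t / (1 + s ^ 2)))))
      = 2 / t * exp (-(|y| + |q|) ^ 2 / (4 * a * t))
        * exp (-(|q| / √(4 * a * t) * s - |y| / √(4 * a * t) / s) ^ 2) := by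
    intro s (hs : 0 < s)
    rw [← exp_add, exponent_comp_div_one_add_sq y q h4a ht hs, exp_add,
      rpow_three_halves_mul_sqrt_sub_div_one_add_sq ht hs, smul_eq_mul]
    field_simp
  have hsqrt : √(4 * a * t) = 2 * √a * √t := by
    rw [sqrt_mul h4a.le, sqrt_mul zero_le_four, show (4 : ℝ) = 2 ^ 2 by norm_num,
      sqrt_sq zero_le_two]
  rw [integral_Ioo_eq_integral_Ioi_comp_div_one_add_sq _ ht,
    setIntegral_congr_fun measurableSet_Ioi hpoint, integral_const_mul,
    integral_Ioi_exp_neg_sq_mul_sub_div (by positivity) (by positivity), hsqrt,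
    sqrt_mul pi_pos.le]
  have : 0 < √t := sqrt_pos.2 ht
  field_simp
  rw [sq_sqrt ht.le]
end

section
/- Let σ₁, σ₂ > 0, q > 0, t > 0, and define u₁(x) = (2σ₁/(σ₁+σ₂))·(1/(√(2π)σ₁√t))·exp(−(x − (1 − σ₁/σ₂)q)²/(2σ₁²t)) for x > q, and u₂(x) = (1/(√(2π)σ₂√t))·[exp(−x²/(2σ₂²t)) + ((σ₂−σ₁)/(σ₁+σ₂))·exp(−(x−2q)²/(2σ₂²t))] for x < q. Then ∫_q^∞ u₁(x)dx + ∫_{−∞}^q u₂(x)dx = 1. -/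
open Real MeasureTheory Set

/-- Shift of variable in an integral over `Ioi`. -/
lemma my_integral_comp_add_right_Ioi (f : ℝ → ℝ) (a c : ℝ) :
    ∫ x in Ioi a, f (x + c) = ∫ x in Ioi (a + c), f x := by
  have A : MeasurableEmbedding fun x : ℝ => x + c :=
    (Homeomorph.addRight c).isClosedEmbedding.measurableEmbedding
  have h := A.setIntegral_map (μ := volume) f (Ioi (a + c))
  rw [map_add_right_eq_self volume c] at h
  rw [h]
  congr 1
  ext x
  simp

/-- Gaussian integral over a half line reduced to the standard one. -/
lemma my_gauss_Ioi (s m c : ℝ) (hs : 0 < s) :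
    ∫ x in Ioi c, Real.exp (-(x - m) ^ 2 / (2 * s ^ 2)) =
      s * ∫ z in Ioi ((c - m) / s), Real.exp (-z ^ 2 / 2) := by
  have h1 : ∫ x in Ioi c, Real.exp (-(x - m) ^ 2 / (2 * s ^ 2)) =
      ∫ y in Ioi (c - m), Real.exp (-y ^ 2 / (2 * s ^ 2)) := by
    have h := my_integral_comp_add_right_Ioi
      (fun y => Real.exp (-y ^ 2 / (2 * s ^ 2))) c (-m)
    simp only [← sub_eq_add_neg] at h
    exact h
  rw [h1]
  have h3 : ∀ y : ℝ, Real.exp (-(s⁻¹ * y) ^ 2 / 2) = Real.exp (-y ^ 2 / (2 * s ^ 2)) := by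
    intro y; congr 1; ring
  have h2 := integral_comp_mul_left_Ioi (fun z => Real.exp (-z ^ 2 / 2)) (c - m)
      (inv_pos.mpr hs)
  simp only [smul_eq_mul, inv_inv, h3] at h2
  rw [h2, inv_mul_eq_div]

theorem stmt4 (σ₁ σ₂ q t : ℝ) (hσ₁ : 0 < σ₁) (hσ₂ : 0 < σ₂) (hq : 0 < q) (ht : 0 < t) :
    (∫ x in Set.Ioi q,
        (2 * σ₁ / (σ₁ + σ₂)) * (1 / (Real.sqrt (2 * π) * σ₁ * Real.sqrt t)) *
          Real.exp (-(x - (1 - σ₁ / σ₂) * q) ^ 2 / (2 * σ₁ ^ 2 * t))) +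
      (∫ x in Set.Iio q,
        (1 / (Real.sqrt (2 * π) * σ₂ * Real.sqrt t)) *
          (Real.exp (-x ^ 2 / (2 * σ₂ ^ 2 * t)) +
            ((σ₂ - σ₁) / (σ₁ + σ₂)) * Real.exp (-(x - 2 * q) ^ 2 / (2 * σ₂ ^ 2 * t)))) = 1 := by
  have hst : 0 < Real.sqrt t := Real.sqrt_pos.mpr ht
  have hs₂ : 0 < σ₂ * Real.sqrt t := mul_pos hσ₂ hst
  have hσ₁₂ : (0 : ℝ) < σ₁ + σ₂ := by linarith
  have h2π : 0 < Real.sqrt (2 * π) := Real.sqrt_pos.mpr (by positivity)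
  have hsq₁ : 2 * σ₁ ^ 2 * t = 2 * (σ₁ * Real.sqrt t) ^ 2 := by
    rw [mul_pow, Real.sq_sqrt ht.le]; ring
  have hsq₂ : 2 * σ₂ ^ 2 * t = 2 * (σ₂ * Real.sqrt t) ^ 2 := by
    rw [mul_pow, Real.sq_sqrt ht.le]; ring
  set c : ℝ := q / (σ₂ * Real.sqrt t) with hc
  set J : ℝ := ∫ z in Ioi c, Real.exp (-z ^ 2 / 2) with hJ
  have hint : Integrable (fun z : ℝ => Real.exp (-z ^ 2 / 2)) := by
    have h := integrable_exp_neg_mul_sq (b := (2 : ℝ)⁻¹) (by norm_num)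
    convert h using 2 with z
    ring
  have htot : ∫ z : ℝ, Real.exp (-z ^ 2 / 2) = Real.sqrt (2 * π) := by
    have h := integral_gaussian ((2 : ℝ)⁻¹)
    simp only [show ∀ z : ℝ, -(2 : ℝ)⁻¹ * z ^ 2 = -z ^ 2 / 2 from fun z => by ring] at h
    rw [h]
    congr 1
    field_simp
  -- reflection: ∫ over Iic (-c) equals J
  have hrefl : ∫ z in Iic (-c), Real.exp (-z ^ 2 / 2) = J := by
    have h := integral_comp_neg_Iic (-c) (fun z => Real.exp (-z ^ 2 / 2))
    simp only [neg_neg, even_two, Even.neg_pow] at h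
    exact h.trans hJ.symm
  have hsplit : (∫ z in Iic (-c), Real.exp (-z ^ 2 / 2)) +
      (∫ z in Ioi (-c), Real.exp (-z ^ 2 / 2)) = Real.sqrt (2 * π) := by
    rw [intervalIntegral.integral_Iic_add_Ioi hint.integrableOn hint.integrableOn, htot]
  have hIoi_negc : ∫ z in Ioi (-c), Real.exp (-z ^ 2 / 2) = Real.sqrt (2 * π) - J := by
    rw [← hsplit, hrefl]; ring
  -- first integral
  have hI1 : (∫ x in Set.Ioi q,
        (2 * σ₁ / (σ₁ + σ₂)) * (1 / (Real.sqrt (2 * π) * σ₁ * Real.sqrt t)) *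
          Real.exp (-(x - (1 - σ₁ / σ₂) * q) ^ 2 / (2 * σ₁ ^ 2 * t))) =
      (2 * σ₁ / (σ₁ + σ₂)) * (1 / (Real.sqrt (2 * π) * σ₁ * Real.sqrt t)) *
        ((σ₁ * Real.sqrt t) * J) := by
    rw [integral_const_mul]
    congr 1
    rw [hsq₁, my_gauss_Ioi _ _ _ (mul_pos hσ₁ hst)]
    rw [show (q - (1 - σ₁ / σ₂) * q) / (σ₁ * Real.sqrt t) = c by
      rw [hc]; field_simp; ring]
  -- integrals over Iic via reflection
  have hIic : ∀ m : ℝ,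
      ∫ x in Iic q, Real.exp (-(x - m) ^ 2 / (2 * (σ₂ * Real.sqrt t) ^ 2)) =
      (σ₂ * Real.sqrt t) *
        ∫ z in Ioi ((-q + m) / (σ₂ * Real.sqrt t)), Real.exp (-z ^ 2 / 2) := by
    intro m
    have h := integral_comp_neg_Iic q
        (fun x => Real.exp (-(x - -m) ^ 2 / (2 * (σ₂ * Real.sqrt t) ^ 2)))
    simp only [show ∀ x : ℝ, (-x - -m : ℝ) ^ 2 = (x - m) ^ 2 from fun x => by ring] at h
    rw [h, my_gauss_Ioi _ _ _ hs₂]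
    rw [show (-q - -m) / (σ₂ * Real.sqrt t) = (-q + m) / (σ₂ * Real.sqrt t) by ring_nf]
  -- integrability of the two pieces
  have hint₁ : Integrable (fun x : ℝ =>
      Real.exp (-x ^ 2 / (2 * σ₂ ^ 2 * t))) := by
    have h := integrable_exp_neg_mul_sq (b := (2 * σ₂ ^ 2 * t)⁻¹)
      (by positivity)
    convert h using 2 with x
    rw [neg_div, neg_mul, inv_mul_eq_div]
  have hint₂ : Integrable (fun x : ℝ =>
      Real.exp (-(x - 2 * q) ^ 2 / (2 * σ₂ ^ 2 * t))) := by
    have h := (integrable_exp_neg_mul_sq (b := (2 * σ₂ ^ 2 * t)⁻¹)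
      (by positivity)).comp_sub_right (2 * q)
    convert h using 2 with x
    rw [neg_div, neg_mul, inv_mul_eq_div]
  -- second integral, first piece
  have hP1 : (∫ x in Set.Iio q, Real.exp (-x ^ 2 / (2 * σ₂ ^ 2 * t))) =
      (σ₂ * Real.sqrt t) * (Real.sqrt (2 * π) - J) := by
    rw [← integral_Iic_eq_integral_Iio]
    have h := hIic 0
    simp only [sub_zero, add_zero] at h
    rw [hsq₂]
    rw [h, show -q / (σ₂ * Real.sqrt t) = -c by rw [hc]; ring, hIoi_negc]
  -- second integral, second piece
  have hP2 : (∫ x in Set.Iio q, Real.exp (-(x - 2 * q) ^ 2 / (2 * σ₂ ^ 2 * t))) =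
      (σ₂ * Real.sqrt t) * J := by
    rw [← integral_Iic_eq_integral_Iio, hsq₂]
    rw [hIic (2 * q), show (-q + 2 * q) / (σ₂ * Real.sqrt t) = c by rw [hc]; ring_nf]
  -- combine second integral
  have hI2 : (∫ x in Set.Iio q,
        (1 / (Real.sqrt (2 * π) * σ₂ * Real.sqrt t)) *
          (Real.exp (-x ^ 2 / (2 * σ₂ ^ 2 * t)) +
            ((σ₂ - σ₁) / (σ₁ + σ₂)) * Real.exp (-(x - 2 * q) ^ 2 / (2 * σ₂ ^ 2 * t)))) =
      (1 / (Real.sqrt (2 * π) * σ₂ * Real.sqrt t)) *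
        ((σ₂ * Real.sqrt t) * (Real.sqrt (2 * π) - J) +
          ((σ₂ - σ₁) / (σ₁ + σ₂)) * ((σ₂ * Real.sqrt t) * J)) := by
    rw [integral_const_mul]
    congr 1
    rw [integral_add hint₁.integrableOn ((hint₂.const_mul _).integrableOn),
      integral_const_mul, hP1, hP2]
  rw [hI1, hI2]
  field_simp
  ring
end

section
/- Let σ₁, σ₂ > 0, q > 0, t > 0, and u₁, u₂ the two-phase densities: u₁(x,t) = (2σ₁/(σ₁+σ₂))·(1/(√(2π)σ₁√t))·exp(−(x−(1−σ₁/σ₂)q)²/(2σ₁²t)), u₂(x,t) = (1/(√(2π)σ₂√t))·[exp(−x²/(2σ₂²t)) + ((σ₂−σ₁)/(σ₁+σ₂))·exp(−(x−2q)²/(2σ₂²t))]. Then (1/2)σ₁²·∂ₓu₁(q,t) = (1/2)σ₂²·∂ₓu₂(q,t). -/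
open Real

lemma gauss_deriv (a k x : ℝ) :
    HasDerivAt (fun y : ℝ => Real.exp (-(y - a) ^ 2 / k))
      (Real.exp (-(x - a) ^ 2 / k) * (-(2 * (x - a)) / k)) x := by
  have h1 : HasDerivAt (fun y : ℝ => -(y - a) ^ 2 / k) (-(2 * (x - a)) / k) x := by
    have h := (((hasDerivAt_id x).sub_const a).pow 2).neg.div_const k
    simpa [mul_comm] using h
  simpa using h1.exp

theorem stmt6 (σ₁ σ₂ q t : ℝ) (hσ₁ : 0 < σ₁) (hσ₂ : 0 < σ₂) (hq : 0 < q) (ht : 0 < t) :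
    (1 / 2) * σ₁ ^ 2 *
        deriv (fun x : ℝ =>
          (2 * σ₁ / (σ₁ + σ₂)) * (1 / (Real.sqrt (2 * π) * σ₁ * Real.sqrt t)) *
            Real.exp (-(x - (1 - σ₁ / σ₂) * q) ^ 2 / (2 * σ₁ ^ 2 * t))) q =
      (1 / 2) * σ₂ ^ 2 *
        deriv (fun x : ℝ =>
          (1 / (Real.sqrt (2 * π) * σ₂ * Real.sqrt t)) *
            (Real.exp (-x ^ 2 / (2 * σ₂ ^ 2 * t)) +
              ((σ₂ - σ₁) / (σ₁ + σ₂)) * Real.exp (-(x - 2 * q) ^ 2 / (2 * σ₂ ^ 2 * t)))) q := by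
  have hs : σ₁ + σ₂ ≠ 0 := by positivity
  have hπ : Real.sqrt (2 * π) ≠ 0 := by positivity
  have htt : Real.sqrt t ≠ 0 := by positivity
  have ht' : t ≠ 0 := ne_of_gt ht
  have hσ₁' : σ₁ ≠ 0 := ne_of_gt hσ₁
  have hσ₂' : σ₂ ≠ 0 := ne_of_gt hσ₂
  -- derivative of left function
  have h1 : HasDerivAt (fun x : ℝ =>
      (2 * σ₁ / (σ₁ + σ₂)) * (1 / (Real.sqrt (2 * π) * σ₁ * Real.sqrt t)) *
        Real.exp (-(x - (1 - σ₁ / σ₂) * q) ^ 2 / (2 * σ₁ ^ 2 * t)))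
      ((2 * σ₁ / (σ₁ + σ₂)) * (1 / (Real.sqrt (2 * π) * σ₁ * Real.sqrt t)) *
        (Real.exp (-(q - (1 - σ₁ / σ₂) * q) ^ 2 / (2 * σ₁ ^ 2 * t)) *
          (-(2 * (q - (1 - σ₁ / σ₂) * q)) / (2 * σ₁ ^ 2 * t)))) q :=
    (gauss_deriv ((1 - σ₁ / σ₂) * q) (2 * σ₁ ^ 2 * t) q).const_mul _
  -- derivative of right function
  have h2a := gauss_deriv 0 (2 * σ₂ ^ 2 * t) q
  simp only [sub_zero] at h2a
  have h2b := (gauss_deriv (2 * q) (2 * σ₂ ^ 2 * t) q).const_mul ((σ₂ - σ₁) / (σ₁ + σ₂))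
  have h2 : HasDerivAt (fun x : ℝ =>
      (1 / (Real.sqrt (2 * π) * σ₂ * Real.sqrt t)) *
        (Real.exp (-x ^ 2 / (2 * σ₂ ^ 2 * t)) +
          ((σ₂ - σ₁) / (σ₁ + σ₂)) * Real.exp (-(x - 2 * q) ^ 2 / (2 * σ₂ ^ 2 * t))))
      ((1 / (Real.sqrt (2 * π) * σ₂ * Real.sqrt t)) *
        (Real.exp (-q ^ 2 / (2 * σ₂ ^ 2 * t)) * (-(2 * q) / (2 * σ₂ ^ 2 * t)) +
          ((σ₂ - σ₁) / (σ₁ + σ₂)) * (Real.exp (-(q - 2 * q) ^ 2 / (2 * σ₂ ^ 2 * t)) *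
            (-(2 * (q - 2 * q)) / (2 * σ₂ ^ 2 * t))))) q :=
    (h2a.add h2b).const_mul _
  rw [h1.deriv, h2.deriv]
  have e1 : -(q - (1 - σ₁ / σ₂) * q) ^ 2 / (2 * σ₁ ^ 2 * t) = -q ^ 2 / (2 * σ₂ ^ 2 * t) := by
    field_simp
    ring
  have e2 : -(q - 2 * q) ^ 2 / (2 * σ₂ ^ 2 * t) = -q ^ 2 / (2 * σ₂ ^ 2 * t) := by ring_nf
  rw [e1, e2]
  field_simp
  ring
end

section
/- For all a > 0 and q ≠ 0, the function g(t) defined for t > 0 by g(t) = −(√a₁/(π(√a₁+√a₂)))·(d/dt)∫₀ᵗ exp(−q²/(4a₂τ))·(1/(√τ√(t−τ))) dτ equals −(√a₁/(√a₁+√a₂))·(|q|/(2√(πa₂)))·t^{−3/2}·exp(−q²/(4a₂t)), for any a₁, a₂ > 0. -/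
/-!
With `c = q² / (4 a₂)`, the substitution `τ = t / (1 + u)` turns the integral into `H (c / t)`,
where `H k = ∫₀^∞ e^{-k(1+u)} / ((1 + u) √u) du`. Differentiating under the integral sign (the
integrands are dominated by `u^{-1/2} e^{-k₀u/2}` for `k` near `k₀ > 0`) gives the Gamma integral
`H' k = -∫₀^∞ e^{-k(1+u)} u^{-1/2} du = -√π e^{-k} / √k`, and the chain rule yields
`d/dt H (c / t) = √π √c t^{-3/2} e^{-c/t}`.
-/

open Real MeasureTheory Set

lemma image_div_one_add_Ioi {t : ℝ} (ht : 0 < t) :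
    (fun u : ℝ => t / (1 + u)) '' Ioi 0 = Ioo 0 t := by
  ext τ
  constructor
  · rintro ⟨u, hu : 0 < u, rfl⟩
    exact ⟨by positivity, (div_lt_iff₀ (by positivity)).2 (by nlinarith)⟩
  · rintro ⟨hτ0, hτt⟩
    refine ⟨t / τ - 1, ?_, ?_⟩
    · simpa using (one_lt_div hτ0).2 hτt
    · simp only
      field_simp
      ring

lemma integral_Ioo_exp_neg_div_eq_integral_Ioi (c : ℝ) {t : ℝ} (ht : 0 < t) :
    ∫ τ in Ioo 0 t, exp (-c / τ) * (1 / (√τ * √(t - τ))) =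
      ∫ u in Ioi 0, exp (-(c / t * (1 + u))) / ((1 + u) * √u) := by
  have hderiv : ∀ u ∈ Ioi (0 : ℝ),
      HasDerivWithinAt (fun u => t / (1 + u)) (-t / (1 + u) ^ 2) (Ioi 0) u := by
    rintro u (hu : 0 < u)
    refine (((hasDerivAt_const u t).fun_div ((hasDerivAt_id' u).const_add 1)
      (by positivity)).congr_deriv ?_).hasDerivWithinAt
    ring
  have hinj : InjOn (fun u : ℝ => t / (1 + u)) (Ioi 0) := by
    rintro u (hu : 0 < u) v (hv : 0 < v) huv
    simp only at huv
    field_simp at huv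
    linarith
  rw [← image_div_one_add_Ioi ht,
    integral_image_eq_integral_abs_deriv_smul measurableSet_Ioi hderiv hinj]
  refine setIntegral_congr_fun measurableSet_Ioi fun u (hu : 0 < u) => ?_
  have hsqrt : √(t / (1 + u)) * √(t - t / (1 + u)) = t / (1 + u) * √u := by
    rw [← sqrt_mul (by positivity),
      show t / (1 + u) * (t - t / (1 + u)) = (t / (1 + u)) ^ 2 * u by field_simp; ring,
      sqrt_mul (by positivity), sqrt_sq (by positivity)]
  rw [hsqrt, smul_eq_mul, abs_div, abs_neg, abs_of_pos ht, abs_of_pos (by positivity)]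
  rw [show -c / (t / (1 + u)) = -(c / t * (1 + u)) by field_simp]
  have : √u ≠ 0 := by positivity
  field_simp

lemma integral_Ioi_exp_neg_mul_one_add_div_sqrt {k : ℝ} (hk : 0 < k) :
    ∫ u in Ioi 0, exp (-(k * (1 + u))) / √u = √π * exp (-k) / √k := by
  have hpt : ∀ u ∈ Ioi (0 : ℝ),
      exp (-(k * (1 + u))) / √u = exp (-k) * (u ^ ((1 / 2 : ℝ) - 1) * exp (-(k * u))) := by
    rintro u (hu : 0 < u)
    rw [show (1 / 2 : ℝ) - 1 = -(1 / 2) by norm_num, rpow_neg hu.le, ← sqrt_eq_rpow,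
      mul_one_add, neg_add, exp_add]
    ring
  rw [setIntegral_congr_fun measurableSet_Ioi hpt, integral_const_mul,
    integral_rpow_mul_exp_neg_mul_Ioi (by norm_num) hk, Gamma_one_half_eq, ← sqrt_eq_rpow,
    sqrt_div' _ hk.le, sqrt_one]
  ring

lemma exp_neg_mul_one_add_div_sqrt_le {k x u : ℝ} (hk : 0 ≤ k) (hx : k ≤ x) (hu : 0 < u) :
    exp (-(x * (1 + u))) / √u ≤ u ^ (-(1 / 2) : ℝ) * exp (-k * u ^ (1 : ℝ)) := by
  rw [rpow_neg hu.le, ← sqrt_eq_rpow, rpow_one, div_eq_inv_mul]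
  gcongr
  nlinarith

lemma hasDerivAt_integral_Ioi_exp_neg_mul_one_add {k : ℝ} (hk : 0 < k) :
    HasDerivAt (fun k => ∫ u in Ioi 0, exp (-(k * (1 + u))) / ((1 + u) * √u))
      (-∫ u in Ioi 0, exp (-(k * (1 + u))) / √u) k := by
  set bound : ℝ → ℝ := fun u => u ^ (-(1 / 2) : ℝ) * exp (-(k / 2) * u ^ (1 : ℝ))
  have hbound : IntegrableOn bound (Ioi 0) :=
    integrableOn_rpow_mul_exp_neg_mul_rpow (by norm_num) one_pos (half_pos hk)
  have hball : ∀ x ∈ Metric.ball k (k / 2), k / 2 ≤ x := fun x hx => by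
    rw [Metric.mem_ball, dist_eq, abs_sub_lt_iff] at hx; linarith
  have hF'bound : ∀ᵐ u ∂volume.restrict (Ioi 0), ∀ x ∈ Metric.ball k (k / 2),
      ‖-(exp (-(x * (1 + u))) / √u)‖ ≤ bound u := by
    filter_upwards [ae_restrict_mem measurableSet_Ioi] with u hu x hx
    rw [norm_neg, norm_of_nonneg (by positivity)]
    exact exp_neg_mul_one_add_div_sqrt_le (half_pos hk).le (hball x hx) hu
  have hFint : IntegrableOn (fun u => exp (-(k * (1 + u))) / ((1 + u) * √u)) (Ioi 0) := by
    refine hbound.mono' (by fun_prop : Measurable _).aestronglyMeasurable ?_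
    filter_upwards [ae_restrict_mem measurableSet_Ioi] with u (hu : 0 < u)
    rw [norm_of_nonneg (by positivity)]
    calc exp (-(k * (1 + u))) / ((1 + u) * √u) ≤ exp (-(k * (1 + u))) / √u := by
          gcongr
          exact le_mul_of_one_le_left (sqrt_nonneg u) (by linarith)
      _ ≤ bound u := exp_neg_mul_one_add_div_sqrt_le (half_pos hk).le (by linarith) hu
  have hderiv : ∀ᵐ u ∂volume.restrict (Ioi 0), ∀ x ∈ Metric.ball k (k / 2),
      HasDerivAt (fun x => exp (-(x * (1 + u))) / ((1 + u) * √u))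
        (-(exp (-(x * (1 + u))) / √u)) x := by
    filter_upwards [ae_restrict_mem measurableSet_Ioi] with u (hu : 0 < u) x _
    refine (((hasDerivAt_mul_const (1 + u)).neg.exp).div_const ((1 + u) * √u)).congr_deriv ?_
    have : √u ≠ 0 := by positivity
    simp only [Pi.neg_apply]
    field_simp
  have := hasDerivAt_integral_of_dominated_loc_of_deriv_le
    (F := fun x u => exp (-(x * (1 + u))) / ((1 + u) * √u))
    (Metric.ball_mem_nhds k (half_pos hk))
    (.of_forall fun x => (by fun_prop : Measurable _).aestronglyMeasurable) hFint
    (by fun_prop : Measurable _).aestronglyMeasurable hF'bound hbound hderiv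
  simpa only [integral_neg] using this.2

lemma rpow_neg_three_halves {t : ℝ} (ht : 0 < t) : t ^ (-(3 : ℝ) / 2) = (t * √t)⁻¹ := by
  rw [show -(3 : ℝ) / 2 = -(1 + 1 / 2) by norm_num, rpow_neg ht.le, rpow_add ht, rpow_one,
    ← sqrt_eq_rpow]

lemma hasDerivAt_integral_Ioo_exp_neg_div {c t : ℝ} (hc : 0 < c) (ht : 0 < t) :
    HasDerivAt (fun t => ∫ τ in Ioo 0 t, exp (-c / τ) * (1 / (√τ * √(t - τ))))
      (√π * √c * t ^ (-(3 : ℝ) / 2) * exp (-c / t)) t := by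
  have hH := hasDerivAt_integral_Ioi_exp_neg_mul_one_add (div_pos hc ht)
  rw [integral_Ioi_exp_neg_mul_one_add_div_sqrt (div_pos hc ht)] at hH
  have hinv : HasDerivAt (fun t => c / t) (-c / t ^ 2) t := by
    refine ((hasDerivAt_const t c).fun_div (hasDerivAt_id' t) ht.ne').congr_deriv ?_
    ring
  have hsubst : (fun t => ∫ τ in Ioo 0 t, exp (-c / τ) * (1 / (√τ * √(t - τ))))
      =ᶠ[nhds t]
        (fun k => ∫ u in Ioi 0, exp (-(k * (1 + u))) / ((1 + u) * √u)) ∘ fun t => c / t := by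
    filter_upwards [eventually_gt_nhds ht] with x hx
    exact integral_Ioo_exp_neg_div_eq_integral_Ioi c hx
  refine ((hH.comp t hinv).congr_of_eventuallyEq hsubst).congr_deriv ?_
  rw [rpow_neg_three_halves ht, sqrt_div' _ ht.le, neg_div]
  have : √t ≠ 0 := by positivity
  have : √c ≠ 0 := by positivity
  field_simp
  rw [sq_sqrt hc.le, sq_sqrt ht.le]
  ring

theorem stmt19_general (a₁ a₂ q : ℝ) (ha₂ : 0 < a₂) (hq : q ≠ 0) :
    ∀ t > (0 : ℝ),
      -(Real.sqrt a₁ / (π * (Real.sqrt a₁ + Real.sqrt a₂))) *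
          deriv (fun t' => ∫ τ in Set.Ioo (0 : ℝ) t',
            Real.exp (-q ^ 2 / (4 * a₂ * τ)) * (1 / (Real.sqrt τ * Real.sqrt (t' - τ)))) t =
        -(Real.sqrt a₁ / (Real.sqrt a₁ + Real.sqrt a₂)) *
          (|q| / (2 * Real.sqrt (π * a₂))) * t ^ (-(3 : ℝ) / 2) *
          Real.exp (-q ^ 2 / (4 * a₂ * t)) := by
  intro t ht
  have hc : 0 < q ^ 2 / (4 * a₂) := by positivity
  have hexp : ∀ τ, -q ^ 2 / (4 * a₂ * τ) = -(q ^ 2 / (4 * a₂)) / τ := fun τ => by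
    rw [neg_div, neg_div, div_div]
  have hsqrt : √(q ^ 2 / (4 * a₂)) = |q| / (2 * √a₂) := by
    rw [sqrt_div' _ (by positivity), sqrt_sq_eq_abs, sqrt_mul' _ ha₂.le,
      show (4 : ℝ) = 2 ^ 2 by norm_num, sqrt_sq zero_le_two]
  simp only [hexp]
  rw [(hasDerivAt_integral_Ioo_exp_neg_div hc ht).deriv, hsqrt, sqrt_mul pi_pos.le]
  have : √π ≠ 0 := by positivity
  have : √a₂ ≠ 0 := by positivity
  field_simp
  rw [sq_sqrt pi_pos.le]

theorem stmt19 (a₁ a₂ q : ℝ) (ha₁ : 0 < a₁) (ha₂ : 0 < a₂) (hq : q ≠ 0) :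
    ∀ t > (0 : ℝ),
      -(Real.sqrt a₁ / (π * (Real.sqrt a₁ + Real.sqrt a₂))) *
          deriv (fun t' => ∫ τ in Set.Ioo (0 : ℝ) t',
            Real.exp (-q ^ 2 / (4 * a₂ * τ)) * (1 / (Real.sqrt τ * Real.sqrt (t' - τ)))) t =
        -(Real.sqrt a₁ / (Real.sqrt a₁ + Real.sqrt a₂)) *
          (|q| / (2 * Real.sqrt (π * a₂))) * t ^ (-(3 : ℝ) / 2) *
          Real.exp (-q ^ 2 / (4 * a₂ * t)) :=
  stmt19_general a₁ a₂ q ha₂ hq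
end
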